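/- arXiv:2309.15548 — 3 statements merged into one kernel-verified Lean document; each statement's English description precedes it below -/
import Mathlib

section
/- Let L(ε) be a k-surjective family of bounded linear operators from B to B̄, and suppose B̄ is finite dimensional. Then the operator L(ε) is surjective for all sufficiently small ε ≠ 0. -/
/-- A k-surjective continuous family `L(ε)` of bounded linear operators into a
finite-dimensional space is surjective for all sufficiently small `ε ≠ 0`. -/
theorem stmt_1 {𝕜 : Type*} [RCLike 𝕜]
    {B B' : Type*} [NormedAddCommGroup B] [NormedSpace 𝕜 B] [CompleteSpace B]
    [NormedAddCommGroup B'] [NormedSpace 𝕜 B'] [FiniteDimensional 𝕜 B']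
    (U : Set 𝕜) (hU : U ∈ nhds (0 : 𝕜))
    (L : 𝕜 → B →L[𝕜] B') (hL : ContinuousOn L U) (k : ℕ)
    (hsurj : ∀ b' : B', ∃ b : Fin (k + 1) → B, ∃ ρ : 𝕜 → B', Continuous ρ ∧
      ∀ ε ∈ U, L ε (∑ i : Fin (k + 1), ε ^ (i : ℕ) • b i) = ε ^ k • b' + ε ^ (k + 1) • ρ ε) :
    ∃ δ > 0, ∀ ε ∈ U, ε ≠ 0 → ‖ε‖ < δ → Function.Surjective (L ε) := by
  classical
  set n := Module.finrank 𝕜 B'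
  let v : Module.Basis (Fin n) 𝕜 B' := Module.finBasis 𝕜 B'
  choose b ρ hρ hcurve using fun j => hsurj (v j)
  -- the perturbed family
  set w : 𝕜 → Fin n → B' := fun ε j => v j + ε • ρ j ε with hw
  -- determinant function
  set f : 𝕜 → 𝕜 := fun ε => (v.toMatrix (w ε)).det with hf
  have hrepr : Continuous (v.equivFun : B' →ₗ[𝕜] (Fin n → 𝕜)) :=
    LinearMap.continuous_of_finiteDimensional _
  have hwc : ∀ j, Continuous fun ε => w ε j := by
    intro j
    exact continuous_const.add (continuous_id.smul (hρ j))
  have hfc : Continuous f := by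
    apply Continuous.matrix_det
    apply continuous_matrix
    intro i j
    have : Continuous fun ε => v.equivFun (w ε j) :=
      hrepr.comp (hwc j)
    have h2 : Continuous fun ε => v.equivFun (w ε j) i :=
      (continuous_apply i).comp this
    simpa [Module.Basis.toMatrix_apply, Module.Basis.equivFun_apply] using h2
  have hf0 : f 0 ≠ 0 := by
    have : w 0 = v := by
      funext j; simp [hw]
    simp [hf, this, Module.Basis.toMatrix_self]
  -- nbhd where f ≠ 0 and inside U
  have hopen : {ε | f ε ≠ 0} ∈ nhds (0 : 𝕜) :=
    (isOpen_compl_singleton.preimage hfc).mem_nhds hf0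
  obtain ⟨δ, hδpos, hball⟩ := Metric.mem_nhds_iff.mp hopen
  refine ⟨δ, hδpos, ?_⟩
  intro ε hεU hε0 hεδ
  have hfε : f ε ≠ 0 := hball (by simpa [Metric.mem_ball, dist_eq_norm] using hεδ)
  -- w ε spans B'
  have hspan : Submodule.span 𝕜 (Set.range (w ε)) = ⊤ := by
    have := (Module.Basis.is_basis_iff_det v (v := w ε)).mpr ?_
    · exact this.2
    · rw [Module.Basis.det_apply]
      exact isUnit_iff_ne_zero.mpr hfε
  -- each w ε j is in the range of L ε
  have hmem : ∀ j, w ε j ∈ LinearMap.range (L ε : B →ₗ[𝕜] B') := by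
    intro j
    have hk : (ε ^ k : 𝕜) ≠ 0 := pow_ne_zero _ hε0
    refine ⟨(ε ^ k)⁻¹ • ∑ i : Fin (k + 1), ε ^ (i : ℕ) • b j i, ?_⟩
    have hc := hcurve j ε hεU
    simp only [ContinuousLinearMap.coe_coe, map_smul, hc]
    rw [hw]
    rw [smul_add, pow_succ, mul_smul, ← smul_assoc, ← smul_assoc]
    simp [hk, smul_smul, inv_mul_cancel₀]
  have : Function.Surjective ((L ε : B →ₗ[𝕜] B')) := by
    rw [← LinearMap.range_eq_top, ← top_le_iff, ← hspan, Submodule.span_le]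
    rintro x ⟨j, rfl⟩
    exact hmem j
  exact this
end

section
/- Let G : B → B̄ be C², z : U → B a C¹ curve with z(0) = 0, and suppose L₀ := G'(0) is surjective with closed complemented kernel N₁, B = N₁ᶜ ⊕ N₁. Then there exists a local C¹ map ψᶜ(ε, φ, n) ∈ N₁ᶜ, defined for small ε ∈ 𝕂, φ ∈ N₁ᶜ, n ∈ N₁, such that G(z(ε) + ψᶜ(ε,φ,n) + n) = G(z(ε)) + L₀·φ. -/
set_option maxHeartbeats 1000000 in
/-- partial linearization, k = 0 case: if `G` is C², `z` a C¹ curve with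
`z(0) = 0`, and `L₀ = G'(0)` is surjective with closed kernel `N₁` and closed complement
`N₁ᶜ`, then there is a local C¹ map `ψᶜ(ε,φ,n) ∈ N₁ᶜ` with
`G(z(ε) + ψᶜ(ε,φ,n) + n) = G(z(ε)) + L₀·φ`. -/
theorem stmt_14 {𝕜 : Type*} [RCLike 𝕜]
    {B B' : Type*} [NormedAddCommGroup B] [NormedSpace 𝕜 B] [CompleteSpace B]
    [NormedAddCommGroup B'] [NormedSpace 𝕜 B'] [CompleteSpace B']
    (G : B → B') (hG : ContDiff 𝕜 2 G)
    (z : 𝕜 → B) (hz : ContDiff 𝕜 1 z) (hz0 : z 0 = 0)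
    (L₀ : B →L[𝕜] B') (hL₀ : HasFDerivAt G L₀ 0) (hsurj : Function.Surjective L₀)
    (N1c : Submodule 𝕜 B) (hN1c : IsClosed (N1c : Set B))
    (hker : IsClosed ((LinearMap.ker (L₀ : B →ₗ[𝕜] B') : Submodule 𝕜 B) : Set B))
    (hcompl : IsCompl N1c (LinearMap.ker (L₀ : B →ₗ[𝕜] B'))) :
    ∃ δ > (0 : ℝ), ∃ ψ : 𝕜 × N1c × (LinearMap.ker (L₀ : B →ₗ[𝕜] B')) → N1c,
      ContDiffOn 𝕜 1 ψ (Metric.ball 0 δ) ∧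
      ∀ p ∈ Metric.ball (0 : 𝕜 × N1c × (LinearMap.ker (L₀ : B →ₗ[𝕜] B'))) δ,
        G (z p.1 + (ψ p : B) + (p.2.2 : B)) = G (z p.1) + L₀ (p.2.1 : B) := by
  classical
  set N₁ : Submodule 𝕜 B := LinearMap.ker (L₀ : B →ₗ[𝕜] B') with hN₁
  haveI : CompleteSpace N1c := hN1c.completeSpace_coe
  haveI : CompleteSpace N₁ := hker.completeSpace_coe
  -- the restriction of L₀ to N1c, as a continuous linear equivalence onto B'
  set T : N1c →L[𝕜] B' := L₀.comp N1c.subtypeL with hT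
  have hTinj : LinearMap.ker (T : N1c →ₗ[𝕜] B') = ⊥ := by
    rw [Submodule.eq_bot_iff]
    rintro ⟨x, hx⟩ hxk
    have hxker : x ∈ N₁ := by
      exact (show L₀ x = 0 by simpa [hT, LinearMap.mem_ker] using hxk)
    have : x ∈ N1c ⊓ N₁ := ⟨hx, hxker⟩
    rw [hcompl.inf_eq_bot] at this
    simpa using this
  have hTsurj : LinearMap.range (T : N1c →ₗ[𝕜] B') = ⊤ := by
    rw [Submodule.eq_top_iff']
    intro b
    obtain ⟨x, hx⟩ := hsurj b
    have hx' : x ∈ N1c ⊔ N₁ := by rw [hcompl.sup_eq_top]; trivial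
    obtain ⟨y, hy, k, hk, rfl⟩ := Submodule.mem_sup.mp hx'
    refine ⟨⟨y, hy⟩, ?_⟩
    have hk0 : L₀ k = 0 := hk
    simp only [hT, ContinuousLinearMap.coe_comp', Function.comp_apply,
      Submodule.coe_subtypeL', Submodule.coe_subtype]
    rw [← hx]
    simp [map_add, hk0]
  set e : N1c ≃L[𝕜] B' := ContinuousLinearEquiv.ofBijective T hTinj hTsurj with he
  have he_apply : ∀ x : N1c, e x = L₀ (x : B) := fun x => rfl
  -- the map H
  set E := 𝕜 × N1c × N₁
  set F := 𝕜 × B' × N₁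
  set u : E → B := fun p => z p.1 + (p.2.1 : B) + (p.2.2 : B) with hu_def
  set H : E → F := fun p => (p.1, G (u p) - G (z p.1), p.2.2) with hH_def
  have hu0 : u 0 = 0 := by simp [hu_def, hz0]
  have hH0 : H 0 = 0 := by
    simp [hH_def, hu0, hz0]; rfl
  -- smoothness of H
  have hzc : ContDiff 𝕜 1 fun p : E => z p.1 := hz.comp contDiff_fst
  have huc : ContDiff 𝕜 1 u := by
    refine ((hz.comp contDiff_fst).add
      (N1c.subtypeL.contDiff.comp (contDiff_fst.comp contDiff_snd))).add
      (N₁.subtypeL.contDiff.comp (contDiff_snd.comp contDiff_snd))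
  have hG1 : ContDiff 𝕜 1 G := hG.of_le one_le_two
  have hHc : ContDiff 𝕜 1 H :=
    contDiff_fst.prodMk (((hG1.comp huc).sub (hG1.comp hzc)).prodMk
      (contDiff_snd.comp contDiff_snd))
  -- derivative of H at 0
  set z' : 𝕜 →L[𝕜] B := fderiv 𝕜 z 0 with hz'_def
  have hz' : HasFDerivAt z z' 0 := (hz.differentiable one_ne_zero 0).hasFDerivAt
  set A : E ≃L[𝕜] F :=
    (ContinuousLinearEquiv.refl 𝕜 𝕜).prodCongr (e.prodCongr (ContinuousLinearEquiv.refl 𝕜 N₁)) with hA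
  have hfst : HasFDerivAt (fun p : E => p.1)
      (ContinuousLinearMap.fst 𝕜 𝕜 (N1c × N₁)) 0 := hasFDerivAt_fst
  set c1 : E →L[𝕜] B := N1c.subtypeL.comp
    ((ContinuousLinearMap.fst 𝕜 N1c N₁).comp (ContinuousLinearMap.snd 𝕜 𝕜 (N1c × N₁))) with hc1
  set c2 : E →L[𝕜] B := N₁.subtypeL.comp
    ((ContinuousLinearMap.snd 𝕜 N1c N₁).comp (ContinuousLinearMap.snd 𝕜 𝕜 (N1c × N₁))) with hc2
  set Du : E →L[𝕜] B :=
    z'.comp (ContinuousLinearMap.fst 𝕜 𝕜 (N1c × N₁)) + c1 + c2 with hDu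
  have hu' : HasFDerivAt u Du 0 :=
    ((hz'.comp 0 hfst).add c1.hasFDerivAt).add c2.hasFDerivAt
  have hGLu : HasFDerivAt G L₀ (u 0) := by rw [hu0]; exact hL₀
  set ζ : E → B := fun p => z p.1 with hζdef
  have hζ' : HasFDerivAt ζ (z'.comp (ContinuousLinearMap.fst 𝕜 𝕜 (N1c × N₁))) 0 :=
    hz'.comp 0 hfst
  have hGLζ : HasFDerivAt G L₀ (ζ 0) := by
    rw [show ζ 0 = 0 from by simp [hζdef, hz0]]; exact hL₀
  have hGz := hGLζ.comp 0 hζ'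
  have hmid : HasFDerivAt (fun p : E => G (u p) - G (z p.1))
      (L₀.comp Du - L₀.comp (z'.comp (ContinuousLinearMap.fst 𝕜 𝕜 (N1c × N₁)))) 0 :=
    (hGLu.comp 0 hu').sub hGz
  have hDH : HasFDerivAt H
      ((ContinuousLinearMap.fst 𝕜 𝕜 (N1c × N₁)).prod
        ((L₀.comp Du - L₀.comp (z'.comp (ContinuousLinearMap.fst 𝕜 𝕜 (N1c × N₁)))).prod
          ((ContinuousLinearMap.snd 𝕜 N1c N₁).comp (ContinuousLinearMap.snd 𝕜 𝕜 (N1c × N₁))))) 0 :=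
    hfst.prodMk (hmid.prodMk (((ContinuousLinearMap.snd 𝕜 N1c N₁).comp
      (ContinuousLinearMap.snd 𝕜 𝕜 (N1c × N₁))).hasFDerivAt))
  have hAeq : (A : E →L[𝕜] F) =
      (ContinuousLinearMap.fst 𝕜 𝕜 (N1c × N₁)).prod
        ((L₀.comp Du - L₀.comp (z'.comp (ContinuousLinearMap.fst 𝕜 𝕜 (N1c × N₁)))).prod
          ((ContinuousLinearMap.snd 𝕜 N1c N₁).comp (ContinuousLinearMap.snd 𝕜 𝕜 (N1c × N₁)))) := by
    refine ContinuousLinearMap.ext fun v => ?_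
    refine Prod.ext rfl (Prod.ext ?_ rfl)
    show e v.2.1 = L₀ (Du v) - L₀ (z' v.1)
    have hDuv : Du v = z' v.1 + (v.2.1 : B) + (v.2.2 : B) := rfl
    have hv0 : L₀ (v.2.2 : B) = 0 := v.2.2.2
    rw [hDuv, map_add, map_add, hv0, he_apply v.2.1]
    abel
  have hA' : HasFDerivAt H (A : E →L[𝕜] F) 0 := by rw [hAeq]; exact hDH
  -- local inverse
  have hHat : ContDiffAt 𝕜 1 H 0 := hHc.contDiffAt
  set inv : F → E := hHat.localInverse hA' one_ne_zero with hinv_def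
  have hinvC : ContDiffAt 𝕜 1 inv 0 := by
    have := hHat.to_localInverse hA' one_ne_zero
    rwa [hH0] at this
  have hri : ∀ᶠ y in nhds (0 : F), H (inv y) = y := by
    have := (hHat.hasStrictFDerivAt' hA' one_ne_zero).eventually_right_inverse
    rwa [hH0] at this
  obtain ⟨s, hs, hsC⟩ := hinvC.contDiffOn le_rfl (by simp)
  obtain ⟨t, ht, hti⟩ := Filter.eventually_iff_exists_mem.mp hri
  have hAcont : Continuous (A : E → F) := A.continuous
  have hA0 : (A : E → F) 0 = 0 := by simp
  have hpre : (A : E → F) ⁻¹' (s ∩ t) ∈ nhds (0 : E) := by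
    apply hAcont.continuousAt.preimage_mem_nhds
    rw [hA0]
    exact Filter.inter_mem hs ht
  obtain ⟨δ, hδ, hball⟩ := Metric.mem_nhds_iff.mp hpre
  refine ⟨δ, hδ, fun q => (inv ((A : E → F) q)).2.1, ?_, ?_⟩
  · have h1 : ContDiffOn 𝕜 1 (fun y : F => (inv y).2.1) s :=
      (contDiff_fst.comp contDiff_snd).comp_contDiffOn hsC
    have h2 : ContDiffOn 𝕜 1 (fun q : E => (inv ((A : E → F) q)).2.1) ((A : E → F) ⁻¹' s) :=
      ContDiffOn.comp (g := fun y : F => (inv y).2.1) (f := (A : E → F))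
        h1 A.contDiff.contDiffOn (Set.mapsTo_preimage _ _)
    exact h2.mono fun x hx => (hball hx).1
  · intro q hq
    have hqt : (A : E → F) q ∈ t := (hball hq).2
    have hHinv : H (inv ((A : E → F) q)) = (A : E → F) q := hti _ hqt
    set w : E := inv ((A : E → F) q) with hw
    have h1 : w.1 = q.1 := congrArg (fun y : F => y.1) hHinv
    have h3 : w.2.2 = q.2.2 := congrArg (fun y : F => y.2.2) hHinv
    have h2 : G (u w) - G (z w.1) = e q.2.1 := congrArg (fun y : F => y.2.1) hHinv
    rw [h1] at h2
    have huw : z q.1 + (w.2.1 : B) + (q.2.2 : B) = u w := by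
      show _ = z w.1 + (w.2.1 : B) + (w.2.2 : B)
      rw [h1, h3]
    show G (z q.1 + (w.2.1 : B) + (q.2.2 : B)) = G (z q.1) + L₀ (q.2.1 : B)
    rw [huw, eq_add_of_sub_eq h2, he_apply]
    exact add_comm _ _
end

section
/- In the setting of the k = 0 partial linearization, if additionally ‖G(0)‖ is sufficiently small (in particular if G(0) = 0), then setting φ₀(ε) := −(L₀|_{N₁ᶜ})⁻¹·G(z(ε)) one obtains complete linearization: G(z(ε) + ψᶜ(ε, φ + φ₀(ε), n) + n) = L₀·φ; consequently all zeros of G near 0 in the image of the chart are given by z = z(ε) + ψᶜ(ε, φ₀(ε), n) + n. -/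
/-- complete linearization, k = 0 case: given the partial linearization
`G(z(ε)+ψᶜ(ε,φ,n)+n) = G(z(ε)) + L₀·φ` on a ball of radius `δ`, with `L₀` restricting to an
isomorphism `T : N₁ᶜ ≃ B̄`, if `‖G(0)‖` is sufficiently small then, with
`φ₀(ε) := -T⁻¹·G(z(ε))`, one has `G(z(ε)+ψᶜ(ε,φ+φ₀(ε),n)+n) = L₀·φ`; consequently the
zeros of `G` in the chart are exactly those with `φ = 0`. -/
theorem stmt_15 {𝕜 : Type*} [RCLike 𝕜]
    {B B' : Type*} [NormedAddCommGroup B] [NormedSpace 𝕜 B] [CompleteSpace B]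
    [NormedAddCommGroup B'] [NormedSpace 𝕜 B'] [CompleteSpace B']
    (G : B → B') (hG : ContDiff 𝕜 2 G)
    (z : 𝕜 → B) (hz : Continuous z) (hz0 : z 0 = 0)
    (L₀ : B →L[𝕜] B') (hL₀ : HasFDerivAt G L₀ 0)
    (N1c : Submodule 𝕜 B) (hN1c : IsClosed (N1c : Set B))
    (hcompl : IsCompl N1c (LinearMap.ker (L₀ : B →ₗ[𝕜] B')))
    (T : N1c ≃L[𝕜] B') (hT : ∀ x : N1c, T x = L₀ (x : B))
    (δ : ℝ) (hδ : 0 < δ)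
    (ψ : 𝕜 → N1c → (LinearMap.ker (L₀ : B →ₗ[𝕜] B')) → N1c)
    (hψ : ∀ (ε : 𝕜) (φ : N1c) (n : LinearMap.ker (L₀ : B →ₗ[𝕜] B')),
      ‖ε‖ < δ → ‖φ‖ < δ → ‖n‖ < δ →
      G (z ε + (ψ ε φ n : B) + (n : B)) = G (z ε) + L₀ (φ : B)) :
    ∃ η > (0 : ℝ), ‖G 0‖ < η →
      ∃ δ' > (0 : ℝ), ∀ (ε : 𝕜) (φ : N1c) (n : LinearMap.ker (L₀ : B →ₗ[𝕜] B')),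
        ‖ε‖ < δ' → ‖φ‖ < δ' → ‖n‖ < δ' →
          G (z ε + (ψ ε (φ + (-(T.symm (G (z ε))))) n : B) + (n : B)) = L₀ (φ : B) ∧
          (G (z ε + (ψ ε (φ + (-(T.symm (G (z ε))))) n : B) + (n : B)) = 0 ↔ φ = 0) := by
  set C : ℝ := ‖(T.symm : B' →L[𝕜] N1c)‖ with hC
  refine ⟨δ / 4 / (C + 1), by positivity, fun hsmall => ?_⟩
  -- the map ε ↦ T.symm (G (z ε)) is continuous
  have hcont : Continuous fun ε : 𝕜 => (T.symm (G (z ε)) : N1c) :=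
    T.symm.continuous.comp (hG.continuous.comp hz)
  have h0 : ‖(T.symm (G (z 0)) : N1c)‖ < δ / 2 := by
    rw [hz0]
    calc ‖(T.symm (G 0) : N1c)‖ ≤ C * ‖G 0‖ :=
          (T.symm : B' →L[𝕜] N1c).le_opNorm _
      _ ≤ (C + 1) * ‖G 0‖ := by
          have : (0:ℝ) ≤ ‖G 0‖ := norm_nonneg _
          nlinarith [norm_nonneg (G 0)]
      _ < (C + 1) * (δ / 4 / (C + 1)) := by
          apply mul_lt_mul_of_pos_left hsmall
          positivity
      _ = δ / 4 := by
          have hC1 : C + 1 ≠ 0 := by positivity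
          field_simp
      _ < δ / 2 := by linarith
  have hopen : IsOpen {ε : 𝕜 | ‖(T.symm (G (z ε)) : N1c)‖ < δ / 2} :=
    isOpen_lt (by fun_prop) continuous_const
  obtain ⟨r, hr, hball⟩ := Metric.isOpen_iff.1 hopen 0 h0
  refine ⟨min r (δ / 2), lt_min hr (by linarith), fun ε φ n hε hφ hn => ?_⟩
  have hεr : ε ∈ Metric.ball (0:𝕜) r := by
    simp [Metric.mem_ball, dist_zero_right]
    exact lt_of_lt_of_le hε (min_le_left _ _)
  have hψsmall : ‖(T.symm (G (z ε)) : N1c)‖ < δ / 2 := hball hεr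
  have hφδ : ‖φ‖ < δ / 2 := lt_of_lt_of_le hφ (min_le_right _ _)
  have hsum : ‖φ + (-(T.symm (G (z ε))))‖ < δ := by
    calc ‖φ + (-(T.symm (G (z ε))))‖ ≤ ‖φ‖ + ‖(T.symm (G (z ε)) : N1c)‖ := by
          simpa using norm_add_le φ (-(T.symm (G (z ε))))
      _ < δ / 2 + δ / 2 := add_lt_add hφδ hψsmall
      _ = δ := by ring
  have hεδ : ‖ε‖ < δ := lt_of_lt_of_le hε (le_trans (min_le_right _ _) (by linarith))
  have hnδ : ‖n‖ < δ := lt_of_lt_of_le hn (le_trans (min_le_right _ _) (by linarith))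
  have key := hψ ε (φ + (-(T.symm (G (z ε))))) n hεδ hsum hnδ
  have hinv : L₀ ((T.symm (G (z ε)) : N1c) : B) = G (z ε) := by
    rw [← hT]; simp
  have hmain : G (z ε + (ψ ε (φ + (-(T.symm (G (z ε))))) n : B) + (n : B)) = L₀ (φ : B) := by
    rw [key]
    have : ((φ + (-(T.symm (G (z ε)))) : N1c) : B) = (φ : B) - ((T.symm (G (z ε)) : N1c) : B) := by
      push_cast; abel
    rw [this, map_sub, hinv]
    abel
  refine ⟨hmain, ?_⟩
  rw [hmain]
  constructor
  · intro h
    have : T φ = 0 := by rw [hT]; exact h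
    simpa using T.injective (by simpa using this)
  · intro h; rw [h]; simp
end
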